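/- Let p be a real polynomial and let c ≥ 0, d, β ≥ 0 be real numbers. Then the number of non-real zeros (with multiplicity) of (cx+d)·p(x) − β·p'(x) is at most the number of non-real zeros of p. -/

import Mathlib

/-!
For `β > 0` divide by `β`: then `q = (u x + v) p - p'` with `u ≥ 0`, and
`q = -e^{φ} (e^{-φ} p)'` for `φ x = (u/2) x² + v x`. A root of `p` of multiplicity `m` is a root
of `q` of multiplicity at least `m - 1`, and Rolle's theorem for `e^{-φ} p` puts a root of `q`
strictly between any two distinct real roots of `p`; when `u > 0`, `e^{-φ} p → 0` at `+∞` gives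
one more root of `q` beyond the largest root of `p`. So `Z_R(q) ≥ Z_R(p) - 1 + [u > 0]` while
`deg q ≤ deg p + [u > 0]`, whence `Z_C(q) ≤ Z_C(p) + 1`. Non-real roots come in conjugate pairs,
so both counts are even and `Z_C(q) ≤ Z_C(p)`. For `β = 0` the same count works for
`(c x + d) p`.
-/

open Polynomial Finset

open scoped Classical in
/-- Number of non-real complex zeros of a real polynomial, counted with multiplicity. -/
noncomputable def ZC (p : Polynomial ℝ) : ℕ :=
  (((p.map (algebraMap ℝ ℂ)).roots).filter (fun z => z.im ≠ 0)).card

/-- Number of real zeros of a real polynomial, counted with multiplicity. -/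
noncomputable def ZR (p : Polynomial ℝ) : ℕ := p.roots.card

open Filter Topology

theorem Finset.card_le_card_sdiff_of_interleaved_of_exists_gt {α : Type*} [LinearOrder α]
    {s t : Finset α} (hbetween : ∀ x ∈ s, ∀ y ∈ s, x < y → ∃ z ∈ t, x < z ∧ z < y)
    (habove : ∀ x ∈ s, ∃ z ∈ t, x < z) : #s ≤ #(t \ s) := by
  rcases s.eq_empty_or_nonempty with rfl | hs
  · simp
  obtain ⟨ξ, hξt, hξ⟩ := habove _ (s.max'_mem hs)
  have hξs : ξ ∉ s := fun h => (s.le_max' ξ h).not_gt hξ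
  have := card_le_sdiff_of_interleaved (s := s) (t := t.erase ξ) fun x _ y hy hxy _ => by
    obtain ⟨z, hzt, hxz, hzy⟩ := hbetween x ‹_› y hy hxy
    exact ⟨z, mem_erase.2 ⟨((hzy.trans_le (s.le_max' y hy)).trans hξ).ne, hzt⟩, hxz, hzy⟩
  rwa [erase_sdiff_comm, card_erase_add_one (mem_sdiff.2 ⟨hξt, hξs⟩)] at this

theorem exists_gt_hasDerivAt_eq_zero_of_tendsto_atTop {f f' : ℝ → ℝ} {a l : ℝ}
    (hf : ∀ x, HasDerivAt f (f' x) x) (hfa : f a = l) (hlim : Tendsto f atTop (𝓝 l)) :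
    ∃ ξ, a < ξ ∧ f' ξ = 0 := by
  have hcont : Continuous f := continuous_iff_continuousAt.2 fun x => (hf x).continuousAt
  rcases eq_or_ne (f (a + 1)) l with h | h
  · obtain ⟨ξ, hξ, h'⟩ := exists_hasDerivAt_eq_zero (lt_add_one a) hcont.continuousOn
      (hfa.trans h.symm) fun x _ => hf x
    exact ⟨ξ, hξ.1, h'⟩
  wlog hlt : l < f (a + 1) generalizing f f' l
  · obtain ⟨ξ, hξ, h'⟩ := this (f := -f) (f' := -f') (l := -l) (fun x => (hf x).neg)
      (by simp [hfa]) hlim.neg hcont.neg (by simpa using h)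
      (by simpa using lt_of_le_of_ne (not_lt.1 hlt) h)
    exact ⟨ξ, hξ, neg_eq_zero.1 h'⟩
  -- since `f → l`, the maximum of `f` on a large enough `[a, b]` is attained inside
  obtain ⟨b, hfb, hab⟩ :=
    ((hlim.eventually (gt_mem_nhds hlt)).and (eventually_gt_atTop (a + 1))).exists
  obtain ⟨ξ, hξ, hmax⟩ := isCompact_Icc.exists_isMaxOn
    (Set.nonempty_Icc.2 (by linarith : a ≤ b)) hcont.continuousOn
  have hξ₁ : f (a + 1) ≤ f ξ := hmax ⟨by linarith, hab.le⟩
  have hξa : a < ξ := hξ.1.lt_of_ne (by rintro rfl; linarith)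
  have hξb : ξ < b := hξ.2.lt_of_ne (by rintro rfl; linarith)
  exact ⟨ξ, hξa, (hmax.isLocalMax (Icc_mem_nhds hξa hξb)).hasDerivAt_eq_zero (hf ξ)⟩

section Multiplicity

variable {R : Type*} [CommRing R] [IsDomain R]

theorem Polynomial.rootMultiplicity_sub_one_le_rootMultiplicity_mul_sub_mul_derivative
    [CharZero R] {L M p : R[X]} (hq : L * p - M * derivative p ≠ 0) (a : R) :
    p.rootMultiplicity a - 1 ≤ (L * p - M * derivative p).rootMultiplicity a := by
  rw [le_rootMultiplicity_iff hq]
  have hp : (X - C a) ^ (p.rootMultiplicity a - 1) ∣ p :=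
    (pow_dvd_pow _ (Nat.sub_le _ _)).trans (pow_rootMultiplicity_dvd p a)
  have hp' : (X - C a) ^ (p.rootMultiplicity a - 1) ∣ derivative p :=
    (pow_dvd_pow _ (rootMultiplicity_sub_one_le_derivative_rootMultiplicity p a)).trans
      (pow_rootMultiplicity_dvd _ a)
  exact (hp.mul_left L).sub (hp'.mul_left M)

theorem Polynomial.card_roots_le_card_roots_add [DecidableEq R] {p q : R[X]}
    (hmult : ∀ a, p.rootMultiplicity a - 1 ≤ q.rootMultiplicity a) {n : ℕ}
    (hn : #p.roots.toFinset ≤ #(q.roots.toFinset \ p.roots.toFinset) + n) :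
    Multiset.card p.roots ≤ Multiset.card q.roots + n := by
  set s := p.roots.toFinset
  set t := q.roots.toFinset
  calc Multiset.card p.roots = ∑ a ∈ s, p.roots.count a :=
        (Multiset.toFinset_sum_count_eq _).symm
    _ ≤ ∑ a ∈ s, (q.roots.count a + 1) := sum_le_sum fun a _ => by
        rw [count_roots, count_roots]; have := hmult a; omega
    _ = ∑ a ∈ s, q.roots.count a + #s := by rw [sum_add_distrib, card_eq_sum_ones]
    _ ≤ ∑ a ∈ s, q.roots.count a + (∑ a ∈ t \ s, q.roots.count a + n) := by
        refine Nat.add_le_add_left (hn.trans (Nat.add_le_add_right ?_ n)) _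
        rw [card_eq_sum_ones]
        exact sum_le_sum fun a ha =>
          Multiset.one_le_count_iff_mem.2 (Multiset.mem_toFinset.1 (mem_sdiff.1 ha).1)
    _ = ∑ a ∈ s ∪ t, q.roots.count a + n := by
        rw [← add_assoc, ← sum_union disjoint_sdiff, union_sdiff_self_eq_union]
    _ ≤ Multiset.card q.roots + n := by
        refine Nat.add_le_add_right ?_ n
        rw [← Multiset.toFinset_sum_count_eq]
        exact sum_le_sum_of_ne_zero fun a _ ha =>
          Multiset.mem_toFinset.2 (Multiset.count_ne_zero.1 ha)

end Multiplicity

section Weighted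

variable (p : ℝ[X]) (u v : ℝ)

theorem hasDerivAt_exp_mul_eval (x : ℝ) :
    HasDerivAt (fun x => Real.exp (-(u / 2) * x ^ 2 - v * x) * p.eval x)
      (-(Real.exp (-(u / 2) * x ^ 2 - v * x) * ((C u * X + C v) * p - derivative p).eval x))
      x := by
  refine ((((hasDerivAt_pow 2 x).const_mul (-(u / 2))).sub
    ((hasDerivAt_id' x).const_mul v)).exp.mul (p.hasDerivAt x)).congr_deriv ?_
  simp only [Pi.sub_apply, eval_sub, eval_mul, eval_add, eval_C, eval_X]
  ring

theorem tendsto_exp_mul_eval_atTop (hu : 0 < u) :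
    Tendsto (fun x => Real.exp (-(u / 2) * x ^ 2 - v * x) * p.eval x) atTop (𝓝 0) := by
  have hexponent : Tendsto (fun x : ℝ => -(x * (u / 2 * x + (v - 1)))) atTop atBot :=
    tendsto_neg_atTop_atBot.comp <| tendsto_id.atTop_mul_atTop₀ <|
      tendsto_atTop_add_const_right _ _ (tendsto_id.const_mul_atTop (by positivity))
  convert p.tendsto_div_exp_atTop.mul (Real.tendsto_exp_atBot.comp hexponent) using 2 with x
  · rw [Function.comp_apply, div_mul_eq_mul_div, eq_div_iff (Real.exp_pos _).ne',
      mul_right_comm, ← Real.exp_add]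
    ring_nf
  · simp

theorem exists_isRoot_sub_derivative_mem_Ioo {a b : ℝ} (ha : p.IsRoot a) (hb : p.IsRoot b)
    (hab : a < b) : ∃ z ∈ Set.Ioo a b, ((C u * X + C v) * p - derivative p).IsRoot z := by
  obtain ⟨z, hz, h⟩ := exists_hasDerivAt_eq_zero hab
    (HasDerivAt.continuousOn fun x _ => hasDerivAt_exp_mul_eval p u v x)
    (by simp [ha.eq_zero, hb.eq_zero]) fun x _ => hasDerivAt_exp_mul_eval p u v x
  exact ⟨z, hz, by simpa [Real.exp_ne_zero] using h⟩

theorem exists_isRoot_sub_derivative_gt (hu : 0 < u) {a : ℝ} (ha : p.IsRoot a) :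
    ∃ z, a < z ∧ ((C u * X + C v) * p - derivative p).IsRoot z := by
  obtain ⟨z, hz, h⟩ := exists_gt_hasDerivAt_eq_zero_of_tendsto_atTop (a := a)
    (hasDerivAt_exp_mul_eval p u v) (by simp [ha.eq_zero]) (tendsto_exp_mul_eval_atTop p u v hu)
  exact ⟨z, hz, by simpa [Real.exp_ne_zero] using h⟩

theorem natDegree_sub_derivative_le :
    ((C u * X + C v) * p - derivative p).natDegree ≤ p.natDegree + 1 := by
  refine (natDegree_sub_le_of_le (m := p.natDegree + 1) ?_ ?_).trans_eq (max_self _)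
  · exact (natDegree_mul_le_of_le natDegree_linear_le le_rfl).trans_eq (add_comm _ _)
  · exact (natDegree_derivative_le p).trans (by omega)

theorem natDegree_C_mul_sub_derivative_le :
    (C v * p - derivative p).natDegree ≤ p.natDegree :=
  (natDegree_sub_le_of_le (natDegree_C_mul_le v p)
    ((natDegree_derivative_le p).trans (Nat.sub_le _ _))).trans_eq (max_self _)

end Weighted

theorem roots_map_conj (p : ℝ[X]) :
    (p.map (algebraMap ℝ ℂ)).roots.map (starRingEnd ℂ) = (p.map (algebraMap ℝ ℂ)).roots := by
  have hconj : (p.map (algebraMap ℝ ℂ)).map (starRingEnd ℂ) = p.map (algebraMap ℝ ℂ) := by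
    rw [Polynomial.map_map]
    congr 1
    ext x
    simp
  conv_rhs => rw [← hconj]
  exact ((IsAlgClosed.splits _).roots_map_of_injective (starRingEnd ℂ).injective).symm

theorem ZC_even (p : ℝ[X]) : Even (ZC p) := by
  set r := (p.map (algebraMap ℝ ℂ)).roots
  have hsplit : r.filter (fun z => z.im ≠ 0) =
      r.filter (fun z => 0 < z.im) + r.filter (fun z => z.im < 0) := by
    rw [Multiset.filter_add_filter,
      (Multiset.filter_eq_nil (p := fun z : ℂ => 0 < z.im ∧ z.im < 0)).2
        fun z _ h => h.1.not_gt h.2, add_zero]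
    exact Multiset.filter_congr fun z _ => by rw [ne_iff_lt_or_gt, or_comm]
  have hconj :
      r.filter (fun z => z.im < 0) = (r.filter (fun z => 0 < z.im)).map (starRingEnd ℂ) := by
    conv_lhs => rw [show r = r.map (starRingEnd ℂ) from (roots_map_conj p).symm]
    rw [Multiset.filter_map]
    exact congrArg _ (Multiset.filter_congr fun z _ => by simp)
  rw [ZC, hsplit, Multiset.card_add, hconj, Multiset.card_map]
  exact Even.add_self _

theorem filter_im_eq_zero_roots_map (p : ℝ[X]) :
    (p.map (algebraMap ℝ ℂ)).roots.filter (fun z => ¬ z.im ≠ 0) =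
      p.roots.map (algebraMap ℝ ℂ) := by
  refine Multiset.ext.2 fun z => ?_
  by_cases hz : z.im = 0
  · rw [Multiset.count_filter_of_pos (p := fun z : ℂ => ¬ z.im ≠ 0) (not_not.2 hz)]
    obtain ⟨x, rfl⟩ : ∃ x : ℝ, algebraMap ℝ ℂ x = z :=
      ⟨z.re, Complex.ext (by simp) (by simp [hz])⟩
    rw [Multiset.count_map_eq_count' _ _ (algebraMap ℝ ℂ).injective, count_roots, count_roots,
      ← eq_rootMultiplicity_map (algebraMap ℝ ℂ).injective]
  · rw [Multiset.count_filter_of_neg (p := fun z : ℂ => ¬ z.im ≠ 0) (not_not.not.2 hz)]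
    refine (Multiset.count_eq_zero.2 fun hmem => hz ?_).symm
    obtain ⟨x, -, rfl⟩ := Multiset.mem_map.1 hmem
    simp

theorem ZC_add_ZR (p : ℝ[X]) : ZC p + ZR p = p.natDegree := by
  rw [ZC, ZR, ← Multiset.card_map (algebraMap ℝ ℂ), ← filter_im_eq_zero_roots_map,
    ← Multiset.card_add, Multiset.filter_add_not,
    splits_iff_card_roots.1 (IsAlgClosed.splits _), natDegree_map]

theorem ZC_le_of_natDegree_add_ZR_le {p q : ℝ[X]}
    (h : q.natDegree + ZR p ≤ p.natDegree + ZR q + 1) : ZC q ≤ ZC p := by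
  have hp := ZC_add_ZR p
  have hq := ZC_add_ZR q
  obtain ⟨k, hk⟩ := ZC_even p
  obtain ⟨l, hl⟩ := ZC_even q
  omega

theorem ZC_mul_le {L : ℝ[X]} (hL : L.natDegree ≤ 1) (p : ℝ[X]) : ZC (L * p) ≤ ZC p := by
  rcases eq_or_ne (L * p) 0 with h | h
  · simp [h, ZC]
  apply ZC_le_of_natDegree_add_ZR_le
  have hdeg := natDegree_mul_le_of_le hL (le_refl p.natDegree)
  have hroots := Multiset.card_le_card (roots.le_of_dvd h (dvd_mul_left p L))
  rw [ZR, ZR]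
  omega

theorem ZC_sub_derivative_le (p : ℝ[X]) {u : ℝ} (hu : 0 ≤ u) (v : ℝ) :
    ZC ((C u * X + C v) * p - derivative p) ≤ ZC p := by
  set q := (C u * X + C v) * p - derivative p
  rcases eq_or_ne q 0 with hq | hq
  · simp [hq, ZC]
  have hp : p ≠ 0 := by rintro rfl; simp [q] at hq
  have hmult (a : ℝ) : p.rootMultiplicity a - 1 ≤ q.rootMultiplicity a := by
    simpa using rootMultiplicity_sub_one_le_rootMultiplicity_mul_sub_mul_derivative
      (L := C u * X + C v) (M := 1) (by simpa using hq) a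
  have hmem_p {a : ℝ} : a ∈ p.roots.toFinset ↔ p.IsRoot a := by
    rw [Multiset.mem_toFinset, mem_roots hp]
  have hmem_q {a : ℝ} : a ∈ q.roots.toFinset ↔ q.IsRoot a := by
    rw [Multiset.mem_toFinset, mem_roots hq]
  have hbetween : ∀ a ∈ p.roots.toFinset, ∀ b ∈ p.roots.toFinset, a < b →
      ∃ z ∈ q.roots.toFinset, a < z ∧ z < b := fun a ha b hb hab => by
    obtain ⟨z, hz, hzq⟩ :=
      exists_isRoot_sub_derivative_mem_Ioo p u v (hmem_p.1 ha) (hmem_p.1 hb) hab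
    exact ⟨z, hmem_q.2 hzq, hz⟩
  apply ZC_le_of_natDegree_add_ZR_le
  rw [ZR, ZR]
  rcases hu.eq_or_lt with rfl | hu
  · have hdeg : q.natDegree ≤ p.natDegree := by
      simpa [q] using natDegree_C_mul_sub_derivative_le p v
    have hcard := card_roots_le_card_roots_add hmult (n := 1)
      (card_le_sdiff_of_interleaved fun a ha b hb hab _ => hbetween a ha b hb hab)
    omega
  · have hcard := card_roots_le_card_roots_add hmult (n := 0)
      (card_le_card_sdiff_of_interleaved_of_exists_gt hbetween fun a ha => by
        obtain ⟨z, hz, hzq⟩ := exists_isRoot_sub_derivative_gt p u v hu (hmem_p.1 ha)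
        exact ⟨z, hmem_q.2 hzq, hz⟩)
    have hdeg : q.natDegree ≤ p.natDegree + 1 := natDegree_sub_derivative_le p u v
    omega

theorem stmt19 (p : Polynomial ℝ) (c d β : ℝ) (hc : 0 ≤ c) (hβ : 0 ≤ β) :
    ZC ((C c * X + C d) * p - C β * derivative p) ≤ ZC p := by
  rcases hβ.eq_or_lt with rfl | hβ
  · simpa using ZC_mul_le natDegree_linear_le p
  have hscale : (C c * X + C d) * p - C β * derivative p =
      C β * ((C (c / β) * X + C (d / β)) * p - derivative p) := by
    rw [mul_sub, ← mul_assoc, mul_add, ← mul_assoc, ← C_mul, ← C_mul, mul_div_cancel₀ _ hβ.ne',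
      mul_div_cancel₀ _ hβ.ne']
  rw [hscale]
  exact (ZC_mul_le ((natDegree_C β).trans_le zero_le_one) _).trans
    (ZC_sub_derivative_le p (div_nonneg hc hβ.le) _)
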